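/- arXiv:1412.3720 — 3 statements merged into one kernel-verified Lean document; each statement's English description precedes it below -/
import Mathlib

section
/- Let X be a topological space, E a real normed vector space, and σ, η : X → E continuous maps; set ρ = σ + η, U₀ = ρ⁻¹(0) and K = σ⁻¹(0). Fix ε ∈ [0,1) and assume that every point u ∈ U₀ has an open neighborhood W in X such that ‖η(w)‖ ≤ ε·‖σ(w)‖ for all w ∈ W. Then U₀ ⊆ K, and U₀ is both open and closed in the subspace K. -/
/-- Abstract topological content of Corollary "Cor_inequality": if `ρ = σ + η`,
`U₀ = ρ⁻¹(0)`, `K = σ⁻¹(0)`, and near every point of `U₀` one has `‖η‖ ≤ ε‖σ‖`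
with `0 ≤ ε < 1`, then `U₀ ⊆ K` and `U₀` is open and closed in the subspace `K`. -/
theorem euler_obstruction_zero_locus_clopen
    {X : Type*} [TopologicalSpace X] {E : Type*} [NormedAddCommGroup E] [NormedSpace ℝ E]
    (σ η : X → E) (hσ : Continuous σ) (hη : Continuous η)
    (ρ : X → E) (hρ : ρ = σ + η)
    (U₀ K : Set X) (hU₀ : U₀ = ρ ⁻¹' {0}) (hK : K = σ ⁻¹' {0})
    (ε : ℝ) (hε : ε ∈ Set.Ico (0 : ℝ) 1)
    (hnbhd : ∀ u ∈ U₀, ∃ W : Set X, IsOpen W ∧ u ∈ W ∧ ∀ w ∈ W, ‖η w‖ ≤ ε * ‖σ w‖) :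
    U₀ ⊆ K ∧ IsOpen ((Subtype.val : K → X) ⁻¹' U₀) ∧
      IsClosed ((Subtype.val : K → X) ⁻¹' U₀) := by
  obtain ⟨hε0, hε1⟩ := hε
  have hsub : U₀ ⊆ K := by
    intro u hu
    obtain ⟨W, _, huW, hW⟩ := hnbhd u hu
    have hρu : σ u + η u = 0 := by
      have := hu
      rw [hU₀] at this
      simpa [hρ] using this
    have hσu : σ u = -η u := eq_neg_of_add_eq_zero_left hρu
    have h1 : ‖σ u‖ ≤ ε * ‖σ u‖ := by
      have := hW u huW
      rw [hσu, norm_neg] at this ⊢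
      exact this
    have h0 : ‖σ u‖ = 0 := by nlinarith [norm_nonneg (σ u)]
    rw [hK]
    simpa using norm_eq_zero.mp h0
  refine ⟨hsub, ?_, ?_⟩
  · rw [isOpen_iff_mem_nhds]
    rintro ⟨x, hxK⟩ hx
    obtain ⟨W, hWopen, hxW, hW⟩ := hnbhd x hx
    have : (Subtype.val : K → X) ⁻¹' W ⊆ (Subtype.val : K → X) ⁻¹' U₀ := by
      rintro ⟨w, hwK⟩ hwW
      have hσw : σ w = 0 := by rw [hK] at hwK; simpa using hwK
      have hηw : ‖η w‖ ≤ 0 := by simpa [hσw] using hW w hwW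
      have hηw0 : η w = 0 := norm_eq_zero.mp (le_antisymm hηw (norm_nonneg _))
      show w ∈ U₀
      rw [hU₀]
      simp [hρ, hσw, hηw0]
    exact Filter.mem_of_superset
      ((hWopen.preimage continuous_subtype_val).mem_nhds hxW) this
  · have : IsClosed U₀ := by
      rw [hU₀]
      exact isClosed_singleton.preimage (by rw [hρ]; exact hσ.add hη)
    exact this.preimage continuous_subtype_val
end

section
/- Let X be a topological space, E a real normed vector space, and σ, η : X → E continuous maps; set ρ = σ + η, U₀ = ρ⁻¹(0) and K = σ⁻¹(0). Fix ε ∈ [0,1) and assume that every point u ∈ U₀ has an open neighborhood W in X such that ‖η(w)‖ ≤ ε·‖σ(w)‖ for all w ∈ W. Then K′ := K \ U₀ is closed in X, and W := X \ K′ is an open subset of X containing U₀. -/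
/-- Abstract topological content of Step 4: with `ρ = σ + η`, `U₀ = ρ⁻¹(0)`,
`K = σ⁻¹(0)`, and the estimate `‖η‖ ≤ ε‖σ‖` (`0 ≤ ε < 1`) near each point of `U₀`,
the set `K′ = K \ U₀` is closed in `X`, and `W = X \ K′` is an open set containing `U₀`. -/
theorem euler_obstruction_open_neighbourhood
    {X : Type*} [TopologicalSpace X] {E : Type*} [NormedAddCommGroup E] [NormedSpace ℝ E]
    (σ η : X → E) (hσ : Continuous σ) (hη : Continuous η)
    (ρ : X → E) (hρ : ρ = σ + η)
    (U₀ K : Set X) (hU₀ : U₀ = ρ ⁻¹' {0}) (hK : K = σ ⁻¹' {0})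
    (ε : ℝ) (hε : ε ∈ Set.Ico (0 : ℝ) 1)
    (hnbhd : ∀ u ∈ U₀, ∃ W : Set X, IsOpen W ∧ u ∈ W ∧ ∀ w ∈ W, ‖η w‖ ≤ ε * ‖σ w‖) :
    IsClosed (K \ U₀) ∧ IsOpen ((K \ U₀)ᶜ) ∧ U₀ ⊆ (K \ U₀)ᶜ := by
  have hKclosed : IsClosed K := hK ▸ isClosed_singleton.preimage hσ
  have hopen : IsOpen ((K \ U₀)ᶜ) := by
    rw [isOpen_iff_forall_mem_open]
    intro x hx
    by_cases hxK : x ∈ K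
    · have hxU : x ∈ U₀ := by
        by_contra h
        exact hx ⟨hxK, h⟩
      obtain ⟨W, hWopen, hxW, hWest⟩ := hnbhd x hxU
      refine ⟨W, ?_, hWopen, hxW⟩
      intro w hw hwK
      have hσw : σ w = 0 := by have := hwK.1; rw [hK] at this; simpa using this
      have : ‖η w‖ ≤ 0 := by simpa [hσw] using hWest w hw
      have hηw : η w = 0 := norm_le_zero_iff.mp this
      exact hwK.2 (by simp [hU₀, hρ, hσw, hηw])
    · exact ⟨Kᶜ, fun w hw hwK => hw hwK.1, hKclosed.isOpen_compl, hxK⟩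
  refine ⟨?_, hopen, fun u hu h => h.2 hu⟩
  rw [← isOpen_compl_iff]
  exact hopen
end

section
/- Let E be a finite-dimensional real inner product space and let C : ℝ → E be real-analytic on a neighborhood of 0, with C(0) = 0 and C not identically zero on any neighborhood of 0. Then the ratio ⟪C(s), C′(s)⟫ / (‖C(s)‖ · ‖C′(s)‖) is well defined for all sufficiently small s > 0 and tends to 1 as s → 0⁺. -/
/-!
Near a zero of finite order the curve factors as `C s = s ^ (n + 1) • g s` with `g` analytic and
`g 0 ≠ 0`, so `C' s = s ^ n • ((n + 1) • g s + s • g' s)`. For `s > 0` the positive factors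
`s ^ (n + 1)` and `s ^ n` do not change the angle, which is therefore the angle between `g s` and
`(n + 1) • g s + s • g' s`; by continuity this tends to the angle between `g 0` and `(n + 1) • g 0`,
which is zero.
-/

open Filter Topology InnerProductGeometry

theorem AnalyticAt.exists_eventuallyEq_pow_succ_smul {𝕜 E : Type*} [NontriviallyNormedField 𝕜]
    [NormedAddCommGroup E] [NormedSpace 𝕜 E] {f : 𝕜 → E} {z₀ : 𝕜} (hf : AnalyticAt 𝕜 f z₀)
    (hf₀ : f z₀ = 0) (hnz : ¬ ∀ᶠ z in 𝓝 z₀, f z = 0) :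
    ∃ (n : ℕ) (g : 𝕜 → E), AnalyticAt 𝕜 g z₀ ∧ g z₀ ≠ 0 ∧
      ∀ᶠ z in 𝓝 z₀, f z = (z - z₀) ^ (n + 1) • g z := by
  obtain ⟨n, g, hg, hg₀, hfg⟩ := hf.exists_eventuallyEq_pow_smul_nonzero_iff.mpr hnz
  obtain _ | n := n
  · simp only [pow_zero, one_smul] at hfg
    exact absurd (hfg.self_of_nhds ▸ hf₀) hg₀
  · exact ⟨n, g, hg, hg₀, hfg⟩

theorem HasDerivAt.pow_succ_smul {𝕜 E : Type*} [NontriviallyNormedField 𝕜]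
    [NormedAddCommGroup E] [NormedSpace 𝕜 E] {g : 𝕜 → E} {g' : E} {s : 𝕜}
    (hg : HasDerivAt g g' s) (n : ℕ) :
    HasDerivAt (fun t => t ^ (n + 1) • g t) (s ^ n • (((n : 𝕜) + 1) • g s + s • g')) s := by
  refine ((hasDerivAt_pow (n + 1) s).smul hg).congr_deriv ?_
  simp only [Nat.cast_add, Nat.cast_one, add_tsub_cancel_right, pow_succ]
  module

section Angle

variable {α E : Type*} [NormedAddCommGroup E] [InnerProductSpace ℝ E] {l : Filter α}
  {u w g h : α → E} {a b : α → ℝ} {v : E}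

theorem eventually_ne_zero_of_eventually_pos_smul (hu : ∀ᶠ x in l, 0 < a x ∧ u x = a x • g x)
    (hg : Tendsto g l (𝓝 v)) (hv : v ≠ 0) : ∀ᶠ x in l, u x ≠ 0 := by
  filter_upwards [hu, hg.eventually_ne hv] with x ⟨hax, hux⟩ hgx
  rw [hux]
  exact smul_ne_zero hax.ne' hgx

theorem tendsto_angle_zero_of_eventually_pos_smul {c : ℝ}
    (hu : ∀ᶠ x in l, 0 < a x ∧ u x = a x • g x) (hw : ∀ᶠ x in l, 0 < b x ∧ w x = b x • h x)
    (hg : Tendsto g l (𝓝 v)) (hh : Tendsto h l (𝓝 (c • v))) (hv : v ≠ 0) (hc : 0 < c) :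
    Tendsto (fun x => angle (u x) (w x)) l (𝓝 0) := by
  have hcont : ContinuousAt (fun y : E × E => angle y.1 y.2) (v, c • v) :=
    continuousAt_angle hv (smul_ne_zero hc.ne' hv)
  have hgh : Tendsto (fun x => (g x, h x)) l (𝓝 (v, c • v)) := hg.prodMk_nhds hh
  have hlim := hcont.tendsto.comp hgh
  have hangle : angle v (c • v) = 0 := by rw [angle_smul_right_of_pos v v hc, angle_self hv]
  rw [hangle] at hlim
  refine hlim.congr' ?_
  filter_upwards [hu, hw] with x ⟨hax, hux⟩ ⟨hbx, hwx⟩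
  rw [Function.comp_apply, hux, hwx, angle_smul_left_of_pos _ _ hax,
    angle_smul_right_of_pos _ _ hbx]

end Angle

/-- Key asymptotic fact of Section 3: along a nontrivial real-analytic curve through
the origin, the cosine of the angle between the position vector `C(s)` and the tangent
`C′(s)` is well defined for small `s > 0` and tends to `1` as `s → 0⁺`. -/
theorem analytic_curve_secant_tangent_angle_tendsto_one
    {E : Type*} [NormedAddCommGroup E] [InnerProductSpace ℝ E] [FiniteDimensional ℝ E]
    (C : ℝ → E) (hC : AnalyticAt ℝ C 0) (h0 : C 0 = 0)
    (hnz : ¬ ∀ᶠ s in nhds (0 : ℝ), C s = 0) :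
    (∀ᶠ s in nhdsWithin (0 : ℝ) (Set.Ioi 0), ‖C s‖ * ‖deriv C s‖ ≠ 0) ∧
      Tendsto (fun s : ℝ => (inner ℝ (C s) (deriv C s) : ℝ) / (‖C s‖ * ‖deriv C s‖))
        (nhdsWithin (0 : ℝ) (Set.Ioi 0)) (nhds 1) := by
  obtain ⟨n, g, hg, hg₀, hCg⟩ := hC.exists_eventuallyEq_pow_succ_smul h0 hnz
  simp only [sub_zero] at hCg
  set h : ℝ → E := fun s => ((n : ℝ) + 1) • g s + s • deriv g s
  have hC' : ∀ᶠ s in 𝓝 0, deriv C s = s ^ n • h s := by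
    filter_upwards [hCg.eventually_nhds, hg.eventually_analyticAt] with s hCs hgs
    exact (EventuallyEq.deriv_eq hCs).trans
      (hgs.differentiableAt.hasDerivAt.pow_succ_smul n).deriv
  have hh : Tendsto h (𝓝 0) (𝓝 (((n : ℝ) + 1) • g 0)) := by
    have hcont : ContinuousAt h 0 := by fun_prop
    simpa [h] using hcont.tendsto
  have hpos : ∀ᶠ s in 𝓝[>] (0 : ℝ), 0 < s := self_mem_nhdsWithin
  have hu : ∀ᶠ s in 𝓝[>] (0 : ℝ), 0 < s ^ (n + 1) ∧ C s = s ^ (n + 1) • g s := by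
    filter_upwards [hpos, nhdsWithin_le_nhds hCg] with s hs hCs using ⟨pow_pos hs _, hCs⟩
  have hw : ∀ᶠ s in 𝓝[>] (0 : ℝ), 0 < s ^ n ∧ deriv C s = s ^ n • h s := by
    filter_upwards [hpos, nhdsWithin_le_nhds hC'] with s hs hCs using ⟨pow_pos hs _, hCs⟩
  have hg' := hg.continuousAt.tendsto.mono_left (nhdsWithin_le_nhds (s := Set.Ioi 0))
  have hh' := hh.mono_left (nhdsWithin_le_nhds (s := Set.Ioi 0))
  have hn : (0 : ℝ) < n + 1 := by positivity
  refine ⟨?_, ?_⟩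
  · filter_upwards [eventually_ne_zero_of_eventually_pos_smul hu hg' hg₀,
      eventually_ne_zero_of_eventually_pos_smul hw hh' (smul_ne_zero hn.ne' hg₀)] with s hCs hC's
    positivity
  · simp_rw [← cos_angle]
    simpa only [Real.cos_zero, Function.comp_def] using (Real.continuous_cos.tendsto 0).comp
      (tendsto_angle_zero_of_eventually_pos_smul hu hw hg' hh' hg₀ hn)
end
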